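/- arXiv:2401.00821 — 2 statements merged into one kernel-verified Lean document; each statement's English description precedes it below -/
import Mathlib

section
/- There is no nonreductive line arrangement A of 12 pairwise distinct lines in ℂP² with n_6(A) = 1, n_4(A) = 1, n_r(A) = 0 for all r ≥ 7, whose point p of multiplicity 6 and point q of multiplicity 4 are not collinear in A, i.e., no line of A contains both p and q. -/
/-!
Let `P` and `Q` be the lines of `A` through `p` and through `q`. They are disjoint, so exactly
two lines `F₁`, `F₂` of `A` avoid both points. A point `x ≠ p` of a line `L ∈ P` lies on no
other line of `P` and on at most one line of `Q`, so if it is a multiple point it lies on `F₁`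
or `F₂`. As `L` carries two multiple points besides `p` and meets each `Fᵢ` only once, one of
them, `y_L`, lies on `F₁` but not on `F₂`; its multiplicity then forces a line `M_L ∈ Q`
through it. Two lines of `P` with the same `M_L` would both pass through the point `M_L ∩ F₁`,
which would then be `p`; so `L ↦ M_L` is injective and `6 = |P| ≤ |Q| = 4`.
-/

open Submodule Module

/-- The underlying vector space `ℂ³` for the linear model of `ℂP²`. -/
abbrev Vc : Type := Fin 3 → ℂ

/-- A projective point of `ℂP²`: a 1-dimensional `ℂ`-subspace of `ℂ³`. -/
def IsProjPoint (p : Submodule ℂ Vc) : Prop := Module.finrank ℂ p = 1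

/-- A projective line of `ℂP²`: a 2-dimensional `ℂ`-subspace of `ℂ³`. -/
def IsProjLine (L : Submodule ℂ Vc) : Prop := Module.finrank ℂ L = 2

/-- A line arrangement: a finite set of (pairwise distinct) projective lines. -/
def LineArrangement (A : Finset (Submodule ℂ Vc)) : Prop := ∀ L ∈ A, IsProjLine L

/-- The multiplicity of a projective point `p` with respect to `A`:
the number of lines of `A` containing `p`. -/
noncomputable def mult (A : Finset (Submodule ℂ Vc)) (p : Submodule ℂ Vc) : ℕ :=
  Set.ncard {L : Submodule ℂ Vc | L ∈ A ∧ p ≤ L}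

/-- `nPts A r` is the number of projective points of multiplicity exactly `r` w.r.t. `A`. -/
noncomputable def nPts (A : Finset (Submodule ℂ Vc)) (r : ℕ) : ℕ :=
  Set.ncard {p : Submodule ℂ Vc | IsProjPoint p ∧ mult A p = r}

/-- A multiple point of `A`: a projective point of multiplicity at least 3. -/
def IsMultPoint (A : Finset (Submodule ℂ Vc)) (p : Submodule ℂ Vc) : Prop :=
  IsProjPoint p ∧ 3 ≤ mult A p

/-- `A` is nonreductive if every line of `A` contains at least 3 multiple points of `A`. -/
def Nonreductive (A : Finset (Submodule ℂ Vc)) : Prop :=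
  ∀ L ∈ A, 3 ≤ Set.ncard {p : Submodule ℂ Vc | IsMultPoint A p ∧ p ≤ L}

/-- The projective line `{aX + bY + cZ = 0}`. -/
noncomputable def lineEq (a b c : ℂ) : Submodule ℂ Vc :=
  LinearMap.ker (a • (LinearMap.proj 0 : Vc →ₗ[ℂ] ℂ) + b • (LinearMap.proj 1 : Vc →ₗ[ℂ] ℂ)
    + c • (LinearMap.proj 2 : Vc →ₗ[ℂ] ℂ))

/-- Lattice isomorphism of two arrangements of `n` lines. -/
def LatticeIso (n : ℕ) (A B : Finset (Submodule ℂ Vc)) : Prop :=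
  ∃ L H : Fin n → Submodule ℂ Vc,
    Function.Injective L ∧ Function.Injective H ∧
    (∀ M, M ∈ A ↔ ∃ i, L i = M) ∧ (∀ M, M ∈ B ↔ ∃ i, H i = M) ∧
    ∀ S : Finset (Fin n), S.Nonempty →
      Module.finrank ℂ ↥(⨅ i ∈ S, L i) = Module.finrank ℂ ↥(⨅ i ∈ S, H i)

/-- Projective equivalence of two arrangements. -/
def ProjEquiv (A B : Finset (Submodule ℂ Vc)) : Prop :=
  ∃ g : Vc ≃ₗ[ℂ] Vc,
    (fun M => Submodule.map (g : Vc →ₗ[ℂ] Vc) M) '' (A : Set (Submodule ℂ Vc))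
      = (B : Set (Submodule ℂ Vc))

open Finset
open scoped Classical

theorem Submodule.eq_of_le_inf_of_finrank_eq_two {K V : Type*} [DivisionRing K]
    [AddCommGroup V] [Module K V] {x y L L' : Submodule K V} (hx : finrank K x = 1)
    (hy : finrank K y = 1) (hL : finrank K L = 2) (hL' : finrank K L' = 2) (hLL' : L ≠ L')
    (hxL : x ≤ L ⊓ L') (hyL : y ≤ L ⊓ L') : x = y := by
  have : FiniteDimensional K L := Module.finite_of_finrank_eq_succ hL
  have : FiniteDimensional K L' := Module.finite_of_finrank_eq_succ hL'
  have hinf : finrank K ↥(L ⊓ L') ≤ 1 := by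
    by_contra! h
    exact hLL' ((eq_of_le_of_finrank_le inf_le_left (by omega)).symm.trans
      (eq_of_le_of_finrank_le inf_le_right (by omega)))
  exact (eq_of_le_of_finrank_le hxL (by omega)).trans (eq_of_le_of_finrank_le hyL (by omega)).symm

noncomputable def linesThrough (A : Finset (Submodule ℂ Vc)) (x : Submodule ℂ Vc) :
    Finset (Submodule ℂ Vc) :=
  A.filter (x ≤ ·)

noncomputable def linesAvoiding (A : Finset (Submodule ℂ Vc)) (p q : Submodule ℂ Vc) :
    Finset (Submodule ℂ Vc) :=
  A.filter fun F => ¬ p ≤ F ∧ ¬ q ≤ F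

variable {A : Finset (Submodule ℂ Vc)} {p q x y L L' F₁ F₂ : Submodule ℂ Vc}

@[simp]
theorem mem_linesThrough : L ∈ linesThrough A x ↔ L ∈ A ∧ x ≤ L :=
  mem_filter

@[simp]
theorem mem_linesAvoiding : L ∈ linesAvoiding A p q ↔ L ∈ A ∧ ¬ p ≤ L ∧ ¬ q ≤ L :=
  mem_filter

theorem LineArrangement.eq_of_le_inf (hA : LineArrangement A) (hL : L ∈ A) (hL' : L' ∈ A)
    (hLL' : L ≠ L') (hx : IsProjPoint x) (hy : IsProjPoint y) (hxL : x ≤ L ⊓ L')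
    (hyL : y ≤ L ⊓ L') : x = y :=
  Submodule.eq_of_le_inf_of_finrank_eq_two hx hy (hA L hL) (hA L' hL') hLL' hxL hyL

theorem mult_eq_card_linesThrough (A : Finset (Submodule ℂ Vc)) (x : Submodule ℂ Vc) :
    mult A x = #(linesThrough A x) := by
  rw [mult, linesThrough, ← Set.ncard_coe_finset, coe_filter]

theorem LineArrangement.card_linesThrough_inter_le_one (hA : LineArrangement A)
    (hx : IsProjPoint x) (hy : IsProjPoint y) (hxy : x ≠ y) :
    #(linesThrough A x ∩ linesThrough A y) ≤ 1 := by
  refine card_le_one.2 fun M hM M' hM' => by_contra fun hne => hxy ?_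
  simp only [mem_inter, mem_linesThrough] at hM hM'
  exact hA.eq_of_le_inf hM.1.1 hM'.1.1 hne hx hy (le_inf hM.1.2 hM'.1.2) (le_inf hM.2.2 hM'.2.2)

theorem mult_le_card_inter_add_card_inter_add_card_inter (A : Finset (Submodule ℂ Vc))
    (x p q : Submodule ℂ Vc) :
    mult A x ≤ #(linesThrough A x ∩ linesThrough A p) + #(linesThrough A x ∩ linesThrough A q)
      + #(linesThrough A x ∩ linesAvoiding A p q) := by
  rw [mult_eq_card_linesThrough]
  calc #(linesThrough A x)
      ≤ #((linesThrough A x ∩ linesThrough A p) ∪ (linesThrough A x ∩ linesThrough A q)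
          ∪ (linesThrough A x ∩ linesAvoiding A p q)) := by
        refine card_le_card fun M hM => ?_
        simp only [mem_union, mem_inter, mem_linesThrough, mem_linesAvoiding] at hM ⊢
        tauto
    _ ≤ _ := (card_union_le _ _).trans (Nat.add_le_add_right (card_union_le _ _) _)

theorem card_linesAvoiding_add_mult_add_mult (hpq : ∀ L ∈ A, ¬ (p ≤ L ∧ q ≤ L)) :
    #(linesAvoiding A p q) + mult A p + mult A q = #A := by
  have hQ : (A.filter fun L => ¬ p ≤ L).filter (q ≤ ·) = linesThrough A q := by
    rw [filter_filter, linesThrough]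
    exact filter_congr fun L hL => ⟨fun h => h.2, fun h => ⟨fun h' => hpq L hL ⟨h', h⟩, h⟩⟩
  rw [mult_eq_card_linesThrough, mult_eq_card_linesThrough,
    ← card_filter_add_card_filter_not (s := A) (p ≤ ·),
    ← card_filter_add_card_filter_not (s := A.filter fun L => ¬ p ≤ L) (q ≤ ·), hQ,
    filter_filter, linesAvoiding, linesThrough]
  omega

theorem Nonreductive.exists_ne_isMultPoint (hNR : Nonreductive A) (hL : L ∈ A)
    (p : Submodule ℂ Vc) :
    ∃ x y, x ≠ y ∧ IsMultPoint A x ∧ x ≤ L ∧ x ≠ p ∧ IsMultPoint A y ∧ y ≤ L ∧ y ≠ p := by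
  set S := {x | IsMultPoint A x ∧ x ≤ L}
  have hS : 3 ≤ S.ncard := hNR L hL
  have hfin : (S \ {p}).Finite := (Set.finite_of_ncard_pos (by omega : 0 < S.ncard)).sdiff
  obtain ⟨x, y, ⟨⟨hx, hxL⟩, hxp⟩, ⟨⟨hy, hyL⟩, hyp⟩, hxy⟩ := (Set.one_lt_ncard_iff hfin).1
    ((by omega : 1 < S.ncard - 1).trans_le (Set.pred_ncard_le_ncard_sdiff_singleton S p))
  exact ⟨x, y, hxy, hx, hxL, hxp, hy, hyL, hyp⟩

theorem exists_mem_linesAvoiding_of_isMultPoint (hA : LineArrangement A) (hp : IsProjPoint p)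
    (hq : IsProjPoint q) (hpq : ∀ L ∈ A, ¬ (p ≤ L ∧ q ≤ L)) (hL : L ∈ A) (hpL : p ≤ L)
    (hx : IsMultPoint A x) (hxL : x ≤ L) (hxp : x ≠ p) :
    ∃ F ∈ linesAvoiding A p q, x ≤ F := by
  have hxq : x ≠ q := by
    rintro rfl
    exact hpq L hL ⟨hpL, hxL⟩
  have hmult := hx.2.trans (mult_le_card_inter_add_card_inter_add_card_inter A x p q)
  have hP := hA.card_linesThrough_inter_le_one hx.1 hp hxp
  have hQ := hA.card_linesThrough_inter_le_one hx.1 hq hxq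
  obtain ⟨F, hF⟩ := card_pos.1 (by omega : 0 < #(linesThrough A x ∩ linesAvoiding A p q))
  exact ⟨F, (mem_inter.1 hF).2, (mem_linesThrough.1 (mem_inter.1 hF).1).2⟩

theorem exists_isMultPoint_le_not_le (hA : LineArrangement A) (hNR : Nonreductive A)
    (hp : IsProjPoint p) (hq : IsProjPoint q) (hpq : ∀ L ∈ A, ¬ (p ≤ L ∧ q ≤ L))
    (hF : linesAvoiding A p q = {F₁, F₂}) (hL : L ∈ A) (hpL : p ≤ L) :
    ∃ y, IsMultPoint A y ∧ y ≤ L ∧ y ≠ p ∧ y ≤ F₁ ∧ ¬ y ≤ F₂ := by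
  obtain ⟨x, x', hxx', hx, hxL, hxp, hx', hx'L, hx'p⟩ := hNR.exists_ne_isMultPoint hL p
  have hon : ∀ z, IsMultPoint A z → z ≤ L → z ≠ p → z ≤ F₁ ∨ z ≤ F₂ := by
    intro z hz hzL hzp
    obtain ⟨F, hFR, hzF⟩ := exists_mem_linesAvoiding_of_isMultPoint hA hp hq hpq hL hpL hz hzL hzp
    rw [hF, mem_insert, mem_singleton] at hFR
    rcases hFR with rfl | rfl
    exacts [Or.inl hzF, Or.inr hzF]
  -- `L` meets each line avoiding `p` in one point
  have hsep : ∀ F ∈ linesAvoiding A p q, ¬ (x ≤ F ∧ x' ≤ F) := by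
    rintro F hFR ⟨hxF, hx'F⟩
    obtain ⟨hFA, hpF, -⟩ := mem_linesAvoiding.1 hFR
    have hFL : F ≠ L := by
      rintro rfl
      exact hpF hpL
    exact hxx' (hA.eq_of_le_inf hFA hL hFL hx.1 hx'.1 (le_inf hxF hxL) (le_inf hx'F hx'L))
  have h₁ : F₁ ∈ linesAvoiding A p q := by simp [hF]
  have h₂ : F₂ ∈ linesAvoiding A p q := by simp [hF]
  rcases hon x hx hxL hxp with h1 | h1 <;> rcases hon x' hx' hx'L hx'p with h2 | h2
  · exact absurd ⟨h1, h2⟩ (hsep F₁ h₁)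
  · exact ⟨x, hx, hxL, hxp, h1, fun h => hsep F₂ h₂ ⟨h, h2⟩⟩
  · exact ⟨x', hx', hx'L, hx'p, h2, fun h => hsep F₂ h₂ ⟨h1, h⟩⟩
  · exact absurd ⟨h1, h2⟩ (hsep F₂ h₂)

theorem exists_mem_linesThrough_of_not_le (hA : LineArrangement A) (hp : IsProjPoint p)
    (hF : linesAvoiding A p q = {F₁, F₂}) (hy : IsMultPoint A y) (hyp : y ≠ p) (hy₂ : ¬ y ≤ F₂) :
    ∃ M ∈ linesThrough A q, y ≤ M := by
  have hmult := hy.2.trans (mult_le_card_inter_add_card_inter_add_card_inter A y p q)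
  have hP := hA.card_linesThrough_inter_le_one hy.1 hp hyp
  have hR : #(linesThrough A y ∩ linesAvoiding A p q) ≤ 1 := by
    refine card_le_one_iff_subset_singleton.2 ⟨F₁, fun M hM => ?_⟩
    simp only [hF, mem_inter, mem_linesThrough, mem_insert, mem_singleton] at hM
    rcases hM with ⟨⟨-, hyM⟩, rfl | rfl⟩
    exacts [mem_singleton_self _, absurd hyM hy₂]
  obtain ⟨M, hM⟩ := card_pos.1 (by omega : 0 < #(linesThrough A y ∩ linesThrough A q))
  exact ⟨M, (mem_inter.1 hM).2, (mem_linesThrough.1 (mem_inter.1 hM).1).2⟩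

theorem mult_le_mult_of_nonreductive (hA : LineArrangement A) (hNR : Nonreductive A)
    (hp : IsProjPoint p) (hq : IsProjPoint q) (hpq : ∀ L ∈ A, ¬ (p ≤ L ∧ q ≤ L))
    (hF : linesAvoiding A p q = {F₁, F₂}) : mult A p ≤ mult A q := by
  have hchoice : ∀ L ∈ linesThrough A p, ∃ y M, IsProjPoint y ∧ y ≤ L ∧ y ≠ p ∧ y ≤ F₁ ∧
      M ∈ linesThrough A q ∧ y ≤ M := by
    intro L hL
    obtain ⟨hLA, hpL⟩ := mem_linesThrough.1 hL
    obtain ⟨y, hy, hyL, hyp, hy₁, hy₂⟩ := exists_isMultPoint_le_not_le hA hNR hp hq hpq hF hLA hpL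
    obtain ⟨M, hM, hyM⟩ := exists_mem_linesThrough_of_not_le hA hp hF hy hyp hy₂
    exact ⟨y, M, hy.1, hyL, hyp, hy₁, hM, hyM⟩
  choose! y M hspec using hchoice
  rw [mult_eq_card_linesThrough, mult_eq_card_linesThrough]
  refine card_le_card_of_injOn M (fun L hL => (hspec L hL).2.2.2.2.1) fun L hL L' hL' hMM => ?_
  by_contra hLL'
  obtain ⟨hLA, hpL⟩ := mem_linesThrough.1 hL
  obtain ⟨hL'A, hpL'⟩ := mem_linesThrough.1 hL'
  obtain ⟨hy, hyL, hyp, hy₁, hM, hyM⟩ := hspec L hL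
  obtain ⟨hy', hyL', -, hy₁', -, hyM'⟩ := hspec L' hL'
  obtain ⟨hMA, hqM⟩ := mem_linesThrough.1 hM
  obtain ⟨hF₁A, -, hqF₁⟩ := mem_linesAvoiding.1 (by simp [hF] : F₁ ∈ linesAvoiding A p q)
  have hMF₁ : M L ≠ F₁ := by
    intro h
    exact hqF₁ (h ▸ hqM)
  -- `y L` and `y L'` are both the point `M L ∩ F₁`, hence lie on `L ∩ L' = p`
  have hyy : y L = y L' :=
    hA.eq_of_le_inf hMA hF₁A hMF₁ hy hy' (le_inf hyM hy₁) (le_inf (hMM ▸ hyM') hy₁')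
  exact hyp (hA.eq_of_le_inf hLA hL'A hLL' hy hp (le_inf hyL (hyy ▸ hyL')) (le_inf hpL hpL'))

/-- There is no nonreductive arrangement of 12 lines with `n₆ = n₄ = 1`, `n_r = 0` for
`r ≥ 7`, whose sextic point and quadruple point are not collinear in the arrangement. -/
theorem no_noncollinear_sextic_quadruple :
    ¬ ∃ (A : Finset (Submodule ℂ Vc)) (p q : Submodule ℂ Vc),
      LineArrangement A ∧ A.card = 12 ∧ Nonreductive A ∧
      nPts A 6 = 1 ∧ nPts A 4 = 1 ∧ (∀ r, 7 ≤ r → nPts A r = 0) ∧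
      IsProjPoint p ∧ mult A p = 6 ∧ IsProjPoint q ∧ mult A q = 4 ∧
      (∀ L ∈ A, ¬ (p ≤ L ∧ q ≤ L)) := by
  rintro ⟨A, p, q, hA, hcard, hNR, -, -, -, hp, hmp, hq, hmq, hpq⟩
  have hR : #(linesAvoiding A p q) = 2 := by
    have := card_linesAvoiding_add_mult_add_mult hpq
    omega
  obtain ⟨F₁, F₂, -, hF⟩ := card_eq_two.1 hR
  have := mult_le_mult_of_nonreductive hA hNR hp hq hpq hF
  omega
end

section
/- Let A be a line arrangement of 12 pairwise distinct lines in ℂP² having a point p of multiplicity 6 lying on the lines L_1, …, L_6 of A, and suppose that every multiple point of A lies on L_1 ∪ L_2 ∪ L_3 ∪ L_4 ∪ L_5 ∪ L_6. Then every line of A that does not pass through p contains at most 5 multiple points of A. -/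
/-!
Two distinct lines of `ℂP²` meet in exactly one point, so a point `q ≠ p` lies on at most one
line through `p`. Hence a multiple point `q` of a line `M ∌ p` lies, besides on `M` and on at most
one line through `p`, on a third line `N ∌ p`, and then `q = N ⊓ M`. So the multiple points of `M`
are among the intersections of `M` with the `12 - 6 - 1 = 5` other lines avoiding `p`.
-/

open Submodule Module

lemma finrank_inf_eq_one_of_isProjLine {L M : Submodule ℂ Vc} (hL : IsProjLine L)
    (hM : IsProjLine M) (hne : L ≠ M) : finrank ℂ ↥(L ⊓ M) = 1 := by
  have hsum : finrank ℂ ↥(L ⊔ M) + finrank ℂ ↥(L ⊓ M) = 4 := by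
    rw [finrank_sup_add_finrank_inf_eq, hL, hM]
  have hsup_le : finrank ℂ ↥(L ⊔ M) ≤ 3 := by
    simpa using Submodule.finrank_le (L ⊔ M)
  have hlt : L < L ⊔ M := by
    refine lt_of_le_of_ne le_sup_left fun h => hne ?_
    exact (eq_of_le_of_finrank_eq (h ▸ le_sup_right) (hM.trans hL.symm)).symm
  have hsup_gt := finrank_lt_finrank_of_lt hlt
  rw [hL] at hsup_gt
  omega

lemma IsProjPoint.eq_inf {q N M : Submodule ℂ Vc} (hq : IsProjPoint q) (hN : IsProjLine N)
    (hM : IsProjLine M) (hne : N ≠ M) (hqN : q ≤ N) (hqM : q ≤ M) : q = N ⊓ M :=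
  eq_of_le_of_finrank_eq (le_inf hqN hqM)
    (hq.trans (finrank_inf_eq_one_of_isProjLine hN hM hne).symm)

lemma IsProjPoint.eq_of_le_of_le {p q N N' : Submodule ℂ Vc} (hp : IsProjPoint p)
    (hq : IsProjPoint q) (hN : IsProjLine N) (hN' : IsProjLine N') (hne : N ≠ N')
    (hpN : p ≤ N) (hpN' : p ≤ N') (hqN : q ≤ N) (hqN' : q ≤ N') : p = q :=
  (hp.eq_inf hN hN' hne hpN hpN').trans (hq.eq_inf hN hN' hne hqN hqN').symm

open Classical in
lemma mult_eq_card_filter (A : Finset (Submodule ℂ Vc)) (q : Submodule ℂ Vc) :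
    mult A q = (A.filter (q ≤ ·)).card := by
  rw [mult, ← Set.ncard_coe_finset, Finset.coe_filter]

open Classical in
lemma mult_add_card_filter_not_le (A : Finset (Submodule ℂ Vc)) (p : Submodule ℂ Vc) :
    mult A p + (A.filter fun N => ¬ p ≤ N).card = A.card := by
  rw [mult_eq_card_filter, Finset.card_filter_add_card_filter_not]

lemma IsMultPoint.exists_line_not_le {A : Finset (Submodule ℂ Vc)} (hA : LineArrangement A)
    {p q M : Submodule ℂ Vc} (hp : IsProjPoint p) (hq : IsMultPoint A q) (hqM : q ≤ M)
    (hpM : ¬ p ≤ M) : ∃ N ∈ A, N ≠ M ∧ ¬ p ≤ N ∧ q ≤ N := by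
  classical
  by_contra! hno
  have hsub : A.filter (q ≤ ·) ⊆ insert M (A.filter fun N => p ≤ N ∧ q ≤ N) := by
    intro N hN
    rw [Finset.mem_filter] at hN
    by_cases hNM : N = M
    · simp [hNM]
    · have hpN : p ≤ N := by_contra fun hpN => hno N hN.1 hNM hpN hN.2
      simp [hN.1, hN.2, hpN]
  have hthrough_p : (A.filter fun N => p ≤ N ∧ q ≤ N).card ≤ 1 := by
    refine Finset.card_le_one.2 fun N hN N' hN' => by_contra fun hne => ?_
    simp only [Finset.mem_filter] at hN hN'
    have hpq := hp.eq_of_le_of_le hq.1 (hA N hN.1) (hA N' hN'.1) hne hN.2.1 hN'.2.1 hN.2.2 hN'.2.2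
    exact hpM (hpq ▸ hqM)
  have hmult := hq.2
  rw [mult_eq_card_filter] at hmult
  have := (Finset.card_le_card hsub).trans (Finset.card_insert_le M _)
  omega

lemma ncard_le_card_of_forall_le_line {M : Submodule ℂ Vc} (hM : IsProjLine M)
    (S : Finset (Submodule ℂ Vc)) (hS : ∀ N ∈ S, IsProjLine N ∧ N ≠ M) (P : Set (Submodule ℂ Vc))
    (hP : ∀ q ∈ P, IsProjPoint q ∧ q ≤ M ∧ ∃ N ∈ S, q ≤ N) : P.ncard ≤ S.card := by
  classical
  have hsub : P ⊆ ↑(S.image (· ⊓ M)) := by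
    intro q hq
    obtain ⟨hq, hqM, N, hNS, hqN⟩ := hP q hq
    exact Finset.mem_image.2 ⟨N, hNS, (hq.eq_inf (hS N hNS).1 hM (hS N hNS).2 hqN hqM).symm⟩
  calc P.ncard ≤ (S.image (· ⊓ M)).card :=
        (Set.ncard_le_ncard hsub (Finset.finite_toSet _)).trans_eq (Set.ncard_coe_finset _)
    _ ≤ S.card := Finset.card_image_le

theorem off_pencil_line_at_most_five_multiple_points_general (A : Finset (Submodule ℂ Vc))
    (hA : LineArrangement A) (hcard : A.card = 12)
    (p : Submodule ℂ Vc) (hp : IsProjPoint p) (hmp : mult A p = 6) :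
    ∀ M ∈ A, ¬ p ≤ M → Set.ncard {q : Submodule ℂ Vc | IsMultPoint A q ∧ q ≤ M} ≤ 5 := by
  classical
  intro M hM hpM
  set S := (A.filter fun N => ¬ p ≤ N).erase M with hS_def
  have hS : S.card = 5 := by
    have := mult_add_card_filter_not_le A p
    rw [Finset.card_erase_of_mem (by simp [hM, hpM])]
    omega
  refine hS ▸ ncard_le_card_of_forall_le_line (hA M hM) S (fun N hN => ?_) _ ?_
  · simp only [hS_def, Finset.mem_erase, Finset.mem_filter] at hN
    exact ⟨hA N hN.2.1, hN.1⟩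
  · rintro q ⟨hq, hqM⟩
    obtain ⟨N, hNA, hNM, hpN, hqN⟩ := hq.exists_line_not_le hA hp hqM hpM
    exact ⟨hq.1, hqM, N, by simp [hS_def, hNA, hNM, hpN], hqN⟩

/-- In an arrangement of 12 lines with a sextic point `p` on the lines `L₁,…,L₆`, if every
multiple point lies on `L₁ ∪ … ∪ L₆`, then every line not through `p` contains at most 5
multiple points. -/
theorem off_pencil_line_at_most_five_multiple_points (A : Finset (Submodule ℂ Vc))
    (hA : LineArrangement A) (hcard : A.card = 12)
    (p : Submodule ℂ Vc) (hp : IsProjPoint p) (hmp : mult A p = 6)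
    (L : Fin 6 → Submodule ℂ Vc) (hL : ∀ i, L i ∈ A) (hLinj : Function.Injective L)
    (hpL : ∀ i, p ≤ L i)
    (hpencil : ∀ q : Submodule ℂ Vc, IsMultPoint A q → ∃ i, q ≤ L i) :
    ∀ M ∈ A, ¬ p ≤ M → Set.ncard {q : Submodule ℂ Vc | IsMultPoint A q ∧ q ≤ M} ≤ 5 :=
  off_pencil_line_at_most_five_multiple_points_general A hA hcard p hp hmp
end
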